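/- For every F ∈ 𝒜, the lower joint probability satisfies P^j_*(F) = sup{ Σ_{h=1}^n σ(F|H_{i_h})·π(H_{i_h}) + Σ_{k : B_k ⊆ F} π(B_k) }, the supremum being over all finite partitions of Ω of the form {H_{i_1},…,H_{i_n}} ∪ {B_1,…,B_t} contained in 𝒜_ℒ, where each H_{i_h} ∈ ℒ and each B_k ∈ 𝒜_ℒ (n, t ≥ 0 and the sets are pairwise disjoint with union Ω). -/

import Mathlib

open Set

open scoped Classical

variable {Ω : Type*}

/-- A field of sets on `Ω`: contains `univ`, closed under complements and finite unions. -/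
def IsSetField (𝒜 : Set (Set Ω)) : Prop :=
  Set.univ ∈ 𝒜 ∧ (∀ A ∈ 𝒜, Aᶜ ∈ 𝒜) ∧ ∀ A ∈ 𝒜, ∀ B ∈ 𝒜, A ∪ B ∈ 𝒜

/-- A finitely additive probability on the field `𝒜`. -/
def IsFAP (𝒜 : Set (Set Ω)) (P : Set Ω → ℝ) : Prop :=
  (∀ A ∈ 𝒜, 0 ≤ P A ∧ P A ≤ 1) ∧ P Set.univ = 1 ∧
    ∀ A ∈ 𝒜, ∀ B ∈ 𝒜, Disjoint A B → P (A ∪ B) = P A + P B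

/-- A partition of `Ω` into nonempty pairwise disjoint pieces. -/
def IsPartition {ι : Type*} (H : ι → Set Ω) : Prop :=
  (∀ i, (H i).Nonempty) ∧ (Pairwise fun i j => Disjoint (H i) (H j)) ∧
    (⋃ i, H i) = Set.univ

/-- A field containing every member of the partition `H` and whose members are
unions of members of the partition. -/
def IsFieldOver {ι : Type*} (H : ι → Set Ω) (𝒜L : Set (Set Ω)) : Prop :=
  IsSetField 𝒜L ∧ (∀ i, H i ∈ 𝒜L) ∧ ∀ A ∈ 𝒜L, ∃ S : Set ι, A = ⋃ i ∈ S, H i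

/-- A field containing `𝒜L ∪ 𝒜E` whose members are unions of the atoms `H i ∩ E j`. -/
def IsJointField {ι κ : Type*} (H : ι → Set Ω) (E : κ → Set Ω)
    (𝒜L 𝒜E 𝒜 : Set (Set Ω)) : Prop :=
  IsSetField 𝒜 ∧ 𝒜L ⊆ 𝒜 ∧ 𝒜E ⊆ 𝒜 ∧
    ∀ A ∈ 𝒜, ∃ S : Set (ι × κ), A = ⋃ p ∈ S, H p.1 ∩ E p.2

/-- A strategy on `𝒜 × ℒ`: each `σ (·|H i)` is a finitely additive probability on `𝒜`
equal to `1` on events implied by `H i`. -/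
def IsStrategy {ι : Type*} (𝒜 : Set (Set Ω)) (H : ι → Set Ω) (σ : Set Ω → ι → ℝ) : Prop :=
  ∀ i, IsFAP 𝒜 (fun F => σ F i) ∧ ∀ F ∈ 𝒜, H i ⊆ F → σ F i = 1

/-- A full conditional probability on the field `𝒜` (conditions (C1), (C2), (C3)). -/
def IsFCP (𝒜 : Set (Set Ω)) (P : Set Ω → Set Ω → ℝ) : Prop :=
  (∀ E ∈ 𝒜, ∀ K ∈ 𝒜, K.Nonempty → P E K = P (E ∩ K) K) ∧
  (∀ K ∈ 𝒜, K.Nonempty → IsFAP 𝒜 fun E => P E K) ∧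
  ∀ E ∈ 𝒜, ∀ F ∈ 𝒜, ∀ K ∈ 𝒜, K.Nonempty → (E ∩ K).Nonempty →
    P (E ∩ F) K = P E K * P F (E ∩ K)

/-- `P` extends the prior `π` on `𝒜L` and the strategy `σ` on `𝒜 × ℒ`. -/
def ExtendsPriorStrategy {ι : Type*} (𝒜 𝒜L : Set (Set Ω)) (H : ι → Set Ω)
    (π : Set Ω → ℝ) (σ : Set Ω → ι → ℝ) (P : Set Ω → Set Ω → ℝ) : Prop :=
  (∀ B ∈ 𝒜L, P B Set.univ = π B) ∧ ∀ F ∈ 𝒜, ∀ i, P F (H i) = σ F i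

/-- The set `𝒫` of full conditional probabilities on `𝒜` extending `{π, σ}`. -/
def FCPSet {ι : Type*} (𝒜 𝒜L : Set (Set Ω)) (H : ι → Set Ω)
    (π : Set Ω → ℝ) (σ : Set Ω → ι → ℝ) : Set (Set Ω → Set Ω → ℝ) :=
  {P | IsFCP 𝒜 P ∧ ExtendsPriorStrategy 𝒜 𝒜L H π σ P}

/-- Lower envelope of a set of conditional probabilities at `F|K`. -/
noncomputable def lowEnv (Ps : Set (Set Ω → Set Ω → ℝ)) (F K : Set Ω) : ℝ :=
  sInf ((fun P => P F K) '' Ps)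

/-- Upper envelope of a set of conditional probabilities at `F|K`. -/
noncomputable def upEnv (Ps : Set (Set Ω → Set Ω → ℝ)) (F K : Set Ω) : ℝ :=
  sSup ((fun P => P F K) '' Ps)

/-- A finite partition of `Ω` contained in `𝒜L`. -/
def IsFinPart (𝒜L : Set (Set Ω)) (T : Finset (Set Ω)) : Prop :=
  (↑T : Set (Set Ω)) ⊆ 𝒜L ∧ (∀ A ∈ T, (A : Set Ω).Nonempty) ∧
    (∀ A ∈ T, ∀ B ∈ T, A ≠ B → Disjoint A B) ∧ ⋃₀ (↑T : Set (Set Ω)) = Set.univ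

/-- Lower Stieltjes integral of `X : ℒ → ℝ` with respect to `μ` on `𝒜L`. -/
noncomputable def lowerSInt {ι : Type*} (H : ι → Set Ω) (𝒜L : Set (Set Ω))
    (X : ι → ℝ) (μ : Set Ω → ℝ) : ℝ :=
  sSup {x | ∃ T : Finset (Set Ω), IsFinPart 𝒜L T ∧
    x = ∑ A ∈ T, sInf {y | ∃ i, H i ⊆ A ∧ y = X i} * μ A}

/-- Upper Stieltjes integral of `X : ℒ → ℝ` with respect to `μ` on `𝒜L`. -/
noncomputable def upperSInt {ι : Type*} (H : ι → Set Ω) (𝒜L : Set (Set Ω))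
    (X : ι → ℝ) (μ : Set Ω → ℝ) : ℝ :=
  sInf {x | ∃ T : Finset (Set Ω), IsFinPart 𝒜L T ∧
    x = ∑ A ∈ T, sSup {y | ∃ i, H i ⊆ A ∧ y = X i} * μ A}

/-- `𝒜L`-continuity of a bounded function `X : ℒ → ℝ`. -/
def ALContinuous {ι : Type*} (H : ι → Set Ω) (𝒜L : Set (Set Ω)) (X : ι → ℝ) : Prop :=
  (∃ M : ℝ, ∀ i, |X i| ≤ M) ∧ ∀ t : ℝ, ∀ ε > (0 : ℝ), ∃ A ∈ 𝒜L,
    (⋃ i ∈ {i | t + ε ≤ X i}, H i) ⊆ A ∧ A ⊆ ⋃ i ∈ {i | t ≤ X i}, H i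

/-- Countable additivity of `P` on the field `𝒜`. -/
def CountablyAdditiveOn (𝒜 : Set (Set Ω)) (P : Set Ω → ℝ) : Prop :=
  ∀ A : ℕ → Set Ω, (∀ n, A n ∈ 𝒜) → (Pairwise fun m n => Disjoint (A m) (A n)) →
    (⋃ n, A n) ∈ 𝒜 → HasSum (fun n => P (A n)) (P (⋃ n, A n))

/-- A (normalized) capacity on the field `𝒜`. -/
def IsCapacity (𝒜 : Set (Set Ω)) (φ : Set Ω → ℝ) : Prop :=
  φ ∅ = 0 ∧ φ Set.univ = 1 ∧ (∀ A ∈ 𝒜, 0 ≤ φ A ∧ φ A ≤ 1) ∧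
    ∀ A ∈ 𝒜, ∀ B ∈ 𝒜, A ⊆ B → φ A ≤ φ B

/-- Total monotonicity of a capacity `φ` on the field `𝒜`. -/
def TotallyMonotone (𝒜 : Set (Set Ω)) (φ : Set Ω → ℝ) : Prop :=
  ∀ n : ℕ, 2 ≤ n → ∀ A : Fin n → Set Ω, (∀ i, A i ∈ 𝒜) →
    ∑ s ∈ Finset.univ.powerset.filter (fun s : Finset (Fin n) => s.Nonempty),
      (-1 : ℝ) ^ (s.card - 1) * φ (⋂ i ∈ s, A i) ≤ φ (⋃ i, A i)

/-- Restriction of a conditional probability to the domain `𝒜 × ℬ⁰`, viewed as a point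
of the product space `ℝ^(𝒜 × ℬ⁰)`. -/
def restrictPairs (𝒜 ℬ : Set (Set Ω)) (Q : Set Ω → Set Ω → ℝ)
    (p : {p : Set Ω × Set Ω // p.1 ∈ 𝒜 ∧ p.2 ∈ ℬ ∧ p.2.Nonempty}) : ℝ :=
  Q p.val.1 p.val.2

/-- Restriction of a set function to the domain `𝒜`, viewed as a point of `ℝ^𝒜`. -/
def restrictDom (𝒜 : Set (Set Ω)) (μ : Set Ω → ℝ) (A : {A : Set Ω // A ∈ 𝒜}) : ℝ :=
  μ A.val

/-- The field of all unions of members of the partition `H`, i.e. `⟨ℒ⟩*`. -/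
def unionsOf {ι : Type*} (H : ι → Set Ω) : Set (Set Ω) :=
  {A | ∃ S : Set ι, A = ⋃ i ∈ S, H i}

/-- The set `𝒬^fd` of fully ℒ-disintegrable full conditional probabilities on `𝒜`
extending `{π, σ}`. -/
def QfdSet {ι : Type*} (𝒜 𝒜L : Set (Set Ω)) (H : ι → Set Ω)
    (π : Set Ω → ℝ) (σ : Set Ω → ι → ℝ) : Set (Set Ω → Set Ω → ℝ) :=
  {Q | IsFCP 𝒜 Q ∧ ExtendsPriorStrategy 𝒜 𝒜L H π σ Q ∧
    ∀ F ∈ 𝒜, ∀ K ∈ 𝒜L, K.Nonempty →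
      Q F K = lowerSInt H 𝒜L (fun i => σ F i) fun B => Q B K}

/-- The set `𝒬^fsc` of fully strongly ℒ-conglomerable full conditional probabilities
on `𝒜` extending `{π, σ}`. -/
def QfscSet {ι : Type*} (𝒜 𝒜L : Set (Set Ω)) (H : ι → Set Ω)
    (π : Set Ω → ℝ) (σ : Set Ω → ι → ℝ) : Set (Set Ω → Set Ω → ℝ) :=
  {Q | IsFCP 𝒜 Q ∧ ExtendsPriorStrategy 𝒜 𝒜L H π σ Q ∧
    ∀ F ∈ 𝒜, ∀ K ∈ 𝒜L, K.Nonempty → ∀ B ∈ 𝒜L, B.Nonempty → B ⊆ K →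
      Q B K * sInf {x | ∃ i, H i ⊆ B ∧ x = σ F i} ≤ Q (F ∩ B) K ∧
      Q (F ∩ B) K ≤ Q B K * sSup {x | ∃ i, H i ⊆ B ∧ x = σ F i}}

/-- The set `𝒫^sc` of strongly ℒ-conglomerable joint probabilities consistent with `{π, σ}`. -/
def PscSet {ι : Type*} (𝒜 𝒜L : Set (Set Ω)) (H : ι → Set Ω)
    (π : Set Ω → ℝ) (σ : Set Ω → ι → ℝ) : Set (Set Ω → ℝ) :=
  {μ | (∃ P ∈ FCPSet 𝒜 𝒜L H π σ, μ = fun F => P F Set.univ) ∧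
    ∀ F ∈ 𝒜, ∀ B ∈ 𝒜L, B.Nonempty →
      π B * sInf {x | ∃ i, H i ⊆ B ∧ x = σ F i} ≤ μ (F ∩ B) ∧
      μ (F ∩ B) ≤ π B * sSup {x | ∃ i, H i ⊆ B ∧ x = σ F i}}

/-- The set `𝒫^fd` of fully ℒ-disintegrable conditional probabilities on `𝒜 × 𝒜L⁰`
extending `{π, σ}`. -/
def PfdSet {ι : Type*} (𝒜 𝒜L : Set (Set Ω)) (H : ι → Set Ω)
    (π : Set Ω → ℝ) (σ : Set Ω → ι → ℝ) : Set (Set Ω → Set Ω → ℝ) :=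
  {P | (∀ E ∈ 𝒜, ∀ K ∈ 𝒜L, K.Nonempty → P E K = P (E ∩ K) K) ∧
    (∀ K ∈ 𝒜L, K.Nonempty → IsFAP 𝒜 fun E => P E K) ∧
    (∀ E ∈ 𝒜, ∀ F ∈ 𝒜, ∀ K ∈ 𝒜L, K.Nonempty → E ∩ K ∈ 𝒜L → (E ∩ K).Nonempty →
      P (E ∩ F) K = P E K * P F (E ∩ K)) ∧
    (∀ B ∈ 𝒜L, P B Set.univ = π B) ∧ (∀ F ∈ 𝒜, ∀ i, P F (H i) = σ F i) ∧
    ∀ F ∈ 𝒜, ∀ K ∈ 𝒜L, K.Nonempty →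
      P F K = lowerSInt H 𝒜L (fun i => σ F i) fun B => P B K}

/-- The Choquet integral `C∫ X dφ = ∫₀¹ φ₊((X ≥ t)) dt` of a `[0,1]`-valued `X : ℒ → ℝ`
with respect to a capacity `φ` on `𝒜L`, where `φ₊` is the inner extension of `φ`. -/
noncomputable def choquetInt {ι : Type*} (H : ι → Set Ω) (𝒜L : Set (Set Ω))
    (X : ι → ℝ) (φ : Set Ω → ℝ) : ℝ :=
  ∫ t in (0 : ℝ)..(1 : ℝ),
    sSup {y | ∃ B ∈ 𝒜L, B ⊆ (⋃ i ∈ {i | t ≤ X i}, H i) ∧ y = φ B}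

/-!
Every `P ∈ 𝒫` has `P(F ∩ Hᵢ | Ω) = σ(F|Hᵢ) π(Hᵢ)` by (C3), so finite additivity bounds `P(F|Ω)`
below by every partition sum. For the reverse inequality one `P ∈ 𝒫` is built explicitly. Let
`μ₁(A) = ∑ᵢ σ(A|Hᵢ) π(Hᵢ)`; then `π - μ₁` is a nonnegative charge on `𝒜_ℒ` vanishing on each
`Hᵢ`. Extend it to the field generated by `𝒜_ℒ` and `F` by its inner charge inside `F` and its outer
charge outside `F`, and then to all sets by Hahn–Banach. Adding `μ₁` gives a joint probability
`ν` with `ν(A ∩ Hᵢ) = σ(A|Hᵢ) π(Hᵢ)` and `ν(F) = μ₁(F) + (π - μ₁)_*(F)`, and conditioning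
lexicographically (on `ν`, then the `σ(·|Hᵢ)`, then point masses, each along a well-order) turns
it into an f.c.p. in `𝒫`. Finally `μ₁(F) + (π - μ₁)_*(F)` is approximated by partition sums: a
finite set of `Hᵢ`, a set `C ∈ 𝒜_ℒ` inside `F` minus those `Hᵢ`, and the rest.
-/

section Charges

variable {𝒞 𝒞' : Set (Set Ω)} {μ ν : Set Ω → ℝ} {A B : Set Ω}

theorem IsSetField.isSetAlgebra (h : IsSetField 𝒞) : MeasureTheory.IsSetAlgebra 𝒞 where
  empty_mem := by simpa using h.2.1 _ h.1
  compl_mem := fun _ hs => h.2.1 _ hs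
  union_mem := fun _ _ hs ht => h.2.2 _ hs _ ht

/-- A charge in the sense of Bhaskara Rao and Bhaskara Rao, *Theory of Charges*. -/
structure IsCharge (𝒞 : Set (Set Ω)) (μ : Set Ω → ℝ) : Prop where
  nonneg : ∀ A ∈ 𝒞, 0 ≤ μ A
  union : ∀ A ∈ 𝒞, ∀ B ∈ 𝒞, Disjoint A B → μ (A ∪ B) = μ A + μ B

theorem IsFAP.isCharge (h : IsFAP 𝒞 μ) : IsCharge 𝒞 μ := ⟨fun A hA => (h.1 A hA).1, h.2.2⟩

theorem isCharge_dirac (ω : Ω) : IsCharge 𝒞 fun A => A.indicator 1 ω where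
  nonneg _ _ := indicator_nonneg (fun _ _ => zero_le_one) ω
  union _ _ _ _ hAB := by rw [indicator_union_of_disjoint hAB]

namespace IsCharge

theorem anti (h : IsCharge 𝒞 μ) (h𝒞 : 𝒞' ⊆ 𝒞) : IsCharge 𝒞' μ :=
  ⟨fun A hA => h.nonneg A (h𝒞 hA), fun A hA B hB => h.union A (h𝒞 hA) B (h𝒞 hB)⟩

theorem add (hμ : IsCharge 𝒞 μ) (hν : IsCharge 𝒞 ν) : IsCharge 𝒞 fun A => μ A + ν A where
  nonneg A hA := add_nonneg (hμ.nonneg A hA) (hν.nonneg A hA)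
  union A hA B hB hAB := by rw [hμ.union A hA B hB hAB, hν.union A hA B hB hAB]; ring

theorem apply_empty (h : IsCharge 𝒞 μ) (h𝒞 : IsSetField 𝒞) : μ ∅ = 0 := by
  have := h.union ∅ h𝒞.isSetAlgebra.empty_mem ∅ h𝒞.isSetAlgebra.empty_mem (disjoint_empty _)
  simpa using this

theorem inter_add_diff (h : IsCharge 𝒞 μ) (h𝒞 : IsSetField 𝒞) (hA : A ∈ 𝒞) (hB : B ∈ 𝒞) :
    μ (A ∩ B) + μ (A \ B) = μ A := by
  rw [← h.union _ (h𝒞.isSetAlgebra.inter_mem hA hB) _ (h𝒞.isSetAlgebra.sdiff_mem hA hB)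
    disjoint_sdiff_inter.symm, inter_union_sdiff]

theorem mono (h : IsCharge 𝒞 μ) (h𝒞 : IsSetField 𝒞) (hA : A ∈ 𝒞) (hB : B ∈ 𝒞) (hAB : A ⊆ B) :
    μ A ≤ μ B := by
  rw [← h.inter_add_diff h𝒞 hB hA, inter_eq_right.2 hAB]
  linarith [h.nonneg _ (h𝒞.isSetAlgebra.sdiff_mem hB hA)]

theorem biUnion (h : IsCharge 𝒞 μ) (h𝒞 : IsSetField 𝒞) {γ : Type*} {u : Finset γ}
    {G : γ → Set Ω} (hG : ∀ k ∈ u, G k ∈ 𝒞) (hd : (u : Set γ).PairwiseDisjoint G) :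
    μ (⋃ k ∈ u, G k) = ∑ k ∈ u, μ (G k) :=
  MeasureTheory.addContent_biUnion_eq (m := h𝒞.isSetAlgebra.isSetRing.addContent_of_union μ
    (h.apply_empty h𝒞) fun hs ht => h.union _ hs _ ht) h𝒞.isSetAlgebra.isSetRing hG hd

theorem isFAP (h : IsCharge 𝒞 μ) (h𝒞 : IsSetField 𝒞) (h1 : μ univ = 1) : IsFAP 𝒞 μ :=
  ⟨fun A hA => ⟨h.nonneg A hA, h1 ▸ h.mono h𝒞 hA h𝒞.1 (subset_univ A)⟩, h1, h.union⟩

theorem sum_mul_inter_le (h : IsCharge 𝒞 μ) (h𝒞 : IsSetField 𝒞) (c : Set Ω → ℝ)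
    (u : Finset (Set Ω)) (hu : ∀ G ∈ u, G ∈ 𝒞) (hA : A ∈ 𝒞) {M : ℝ}
    (hM : ∀ ω ∈ A, ∑ G ∈ u, c G * G.indicator 1 ω ≤ M) :
    ∑ G ∈ u, c G * μ (G ∩ A) ≤ M * μ A := by
  classical
  induction u using Finset.induction_on generalizing A M with
  | empty =>
    rcases A.eq_empty_or_nonempty with rfl | ⟨ω, hω⟩
    · simp [h.apply_empty h𝒞]
    · simpa using mul_nonneg (by simpa using hM ω hω) (h.nonneg A hA)
  | insert G₀ u hG₀ ih =>
    have hG₀𝒞 := hu G₀ (Finset.mem_insert_self _ _)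
    have hu' : ∀ G ∈ u, G ∈ 𝒞 := fun G hG => hu G (Finset.mem_insert_of_mem hG)
    -- split `A` along `G₀`: on `A ∩ G₀` the remaining sum is bounded by `M - c G₀`
    have hin := ih hu' (h𝒞.isSetAlgebra.inter_mem hA hG₀𝒞) (M := M - c G₀) fun ω hω => by
      have := hM ω hω.1
      rw [Finset.sum_insert hG₀, indicator_of_mem hω.2] at this
      simp only [Pi.one_apply, mul_one] at this
      linarith
    have hout := ih hu' (h𝒞.isSetAlgebra.sdiff_mem hA hG₀𝒞) (M := M) fun ω hω => by
      simpa [Finset.sum_insert hG₀, indicator_of_notMem hω.2] using hM ω hω.1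
    have hsplit : ∀ G ∈ u, μ (G ∩ A) = μ (G ∩ (A ∩ G₀)) + μ (G ∩ (A \ G₀)) := fun G hG => by
      rw [← h.inter_add_diff h𝒞 (h𝒞.isSetAlgebra.inter_mem (hu' G hG) hA) hG₀𝒞, inter_assoc,
        inter_sdiff_assoc]
    rw [Finset.sum_insert hG₀, Finset.sum_congr rfl fun G hG => by rw [hsplit G hG, mul_add],
      Finset.sum_add_distrib, inter_comm G₀ A]
    linear_combination hin + hout + M * h.inter_add_diff h𝒞 hA hG₀𝒞

end IsCharge

end Charges

section Extension

variable {𝒞 : Set (Set Ω)} {μ : Set Ω → ℝ}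

/-- Hahn–Banach on formal combinations `z` of sets, with the sublinear functional
`z ↦ μ univ * sup (∑ z A • 1_A)`, which dominates `μ` on combinations of members of `𝒞` by
`IsCharge.sum_mul_inter_le`. -/
theorem IsCharge.exists_extension [Nonempty Ω] (h : IsCharge 𝒞 μ) (h𝒞 : IsSetField 𝒞) :
    ∃ ρ : Set Ω → ℝ, IsCharge univ ρ ∧ ∀ A ∈ 𝒞, ρ A = μ A := by
  classical
  let Φ : (Set Ω →₀ ℝ) →ₗ[ℝ] Ω → ℝ := Finsupp.linearCombination ℝ fun A => A.indicator 1
  have hΦ : ∀ z ω, Φ z ω = ∑ A ∈ z.support, z A * A.indicator 1 ω := fun z ω => by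
    simp [Φ, Finsupp.linearCombination_apply, Finsupp.sum]
  have hΦsingle : ∀ A, Φ (Finsupp.single A 1) = A.indicator 1 := fun A => by
    simp [Φ]
  have hbdd : ∀ z, BddAbove (range (Φ z)) := fun z => by
    refine ⟨∑ A ∈ z.support, |z A|, ?_⟩
    rintro _ ⟨ω, rfl⟩
    rw [hΦ]
    refine Finset.sum_le_sum fun A _ => ?_
    by_cases hω : ω ∈ A <;> simp [hω, le_abs_self]
  have hμ0 : 0 ≤ μ univ := h.nonneg _ h𝒞.1
  let N : (Set Ω →₀ ℝ) → ℝ := fun z => μ univ * ⨆ ω, Φ z ω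
  have hN_nonpos : ∀ z, (∀ ω, Φ z ω ≤ 0) → N z ≤ 0 := fun z hz =>
    mul_nonpos_of_nonneg_of_nonpos hμ0 (ciSup_le hz)
  let f : (Set Ω →₀ ℝ) →ₗ.[ℝ] ℝ :=
    ⟨Finsupp.supported ℝ ℝ 𝒞, (Finsupp.linearCombination ℝ μ).domRestrict _⟩
  obtain ⟨g, hgf, hgN⟩ := exists_extension_of_le_sublinear f N
    (fun c hc z => by
      simp only [N, map_smul, Pi.smul_apply, smul_eq_mul, ← Real.mul_iSup_of_nonneg hc.le]
      ring)
    (fun y z => by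
      rw [← mul_add]
      refine mul_le_mul_of_nonneg_left (ciSup_le fun ω => ?_) hμ0
      rw [map_add, Pi.add_apply]
      exact add_le_add (le_ciSup (hbdd y) ω) (le_ciSup (hbdd z) ω))
    (by
      rintro ⟨z, hz⟩
      have key := h.sum_mul_inter_le h𝒞 z z.support (fun A hA => hz hA) h𝒞.1
        (M := ⨆ ω, Φ z ω) fun ω _ => hΦ z ω ▸ le_ciSup (hbdd z) ω
      simp only [inter_univ] at key
      simpa [f, N, Finsupp.linearCombination_apply, Finsupp.sum, mul_comm] using key)
  have hg_nonpos : ∀ z, (∀ ω, Φ z ω ≤ 0) → g z ≤ 0 := fun z hz => (hgN z).trans (hN_nonpos z hz)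
  refine ⟨fun A => g (Finsupp.single A (1 : ℝ)), ⟨fun A _ => ?_, fun A _ B _ hAB => ?_⟩,
    fun A hA => ?_⟩
  · have := hg_nonpos (-Finsupp.single A 1) fun ω => by
      by_cases hω : ω ∈ A <;> simp [hΦsingle, hω]
    simpa using this
  · -- `z` below represents the zero function, so `g z = 0`
    set z := Finsupp.single (A ∪ B) (1 : ℝ) - Finsupp.single A 1 - Finsupp.single B 1
    have hz : Φ z = 0 := by
      ext ω
      simp [z, hΦsingle, indicator_union_of_disjoint hAB]
    have h1 := hg_nonpos z fun ω => by simp [hz]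
    have h2 := hg_nonpos (-z) fun ω => by simp [hz]
    simp only [z, map_sub, map_neg] at h1 h2
    linarith
  · have := hgf ⟨Finsupp.single A 1, Finsupp.single_mem_supported ℝ 1 hA⟩
    simpa [f] using this

end Extension

section InnerCharge

variable {𝒞 : Set (Set Ω)} {μ : Set Ω → ℝ} {B C D X Y : Set Ω}

noncomputable def innerCharge (𝒞 : Set (Set Ω)) (μ : Set Ω → ℝ) (D : Set Ω) : ℝ :=
  sSup (μ '' {C | C ∈ 𝒞 ∧ C ⊆ D})

/-- The field generated by `𝒞` and one more set `F`. -/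
def fieldAdjoin (𝒞 : Set (Set Ω)) (F : Set Ω) : Set (Set Ω) :=
  {A | ∃ B₁ ∈ 𝒞, ∃ B₂ ∈ 𝒞, A ∩ F = B₁ ∩ F ∧ A \ F = B₂ \ F}

theorem subset_fieldAdjoin (F : Set Ω) : 𝒞 ⊆ fieldAdjoin 𝒞 F :=
  fun A hA => ⟨A, hA, A, hA, rfl, rfl⟩

theorem IsSetField.self_mem_fieldAdjoin (h𝒞 : IsSetField 𝒞) (F : Set Ω) : F ∈ fieldAdjoin 𝒞 F :=
  ⟨univ, h𝒞.1, ∅, h𝒞.isSetAlgebra.empty_mem, by simp, by simp⟩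

theorem IsSetField.fieldAdjoin (h𝒞 : IsSetField 𝒞) (F : Set Ω) :
    IsSetField (fieldAdjoin 𝒞 F) := by
  refine ⟨subset_fieldAdjoin F h𝒞.1, ?_, ?_⟩
  · rintro A ⟨B₁, hB₁, B₂, hB₂, h₁, h₂⟩
    refine ⟨B₁ᶜ, h𝒞.2.1 _ hB₁, B₂ᶜ, h𝒞.2.1 _ hB₂, ?_, ?_⟩ <;>
      ext ω <;> [have := Set.ext_iff.1 h₁ ω; have := Set.ext_iff.1 h₂ ω] <;> simp at this ⊢ <;>
      tauto
  · rintro A ⟨B₁, hB₁, B₂, hB₂, h₁, h₂⟩ A' ⟨B₁', hB₁', B₂', hB₂', h₁', h₂'⟩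
    refine ⟨B₁ ∪ B₁', h𝒞.2.2 _ hB₁ _ hB₁', B₂ ∪ B₂', h𝒞.2.2 _ hB₂ _ hB₂', ?_, ?_⟩
    · rw [union_inter_distrib_right, union_inter_distrib_right, h₁, h₁']
    · rw [union_sdiff_distrib, union_sdiff_distrib, h₂, h₂']

theorem innerCharge_le (h𝒞 : IsSetField 𝒞) {y : ℝ} (hy : ∀ C ∈ 𝒞, C ⊆ D → μ C ≤ y) :
    innerCharge 𝒞 μ D ≤ y :=
  csSup_le ⟨μ ∅, ∅, ⟨h𝒞.isSetAlgebra.empty_mem, empty_subset D⟩, rfl⟩ <| by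
    rintro _ ⟨C, ⟨hC, hCD⟩, rfl⟩
    exact hy C hC hCD

namespace IsCharge

theorem le_innerCharge (h : IsCharge 𝒞 μ) (h𝒞 : IsSetField 𝒞) (hC : C ∈ 𝒞) (hCD : C ⊆ D) :
    μ C ≤ innerCharge 𝒞 μ D :=
  le_csSup ⟨μ univ, by rintro _ ⟨C', ⟨hC', -⟩, rfl⟩; exact h.mono h𝒞 hC' h𝒞.1 (subset_univ C')⟩
    ⟨C, ⟨hC, hCD⟩, rfl⟩

theorem innerCharge_eq_of_mem (h : IsCharge 𝒞 μ) (h𝒞 : IsSetField 𝒞) (hB : B ∈ 𝒞) :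
    innerCharge 𝒞 μ B = μ B :=
  le_antisymm (innerCharge_le h𝒞 fun _ hC hCB => h.mono h𝒞 hC hB hCB)
    (h.le_innerCharge h𝒞 hB subset_rfl)

theorem innerCharge_le_apply (h : IsCharge 𝒞 μ) (h𝒞 : IsSetField 𝒞) (hB : B ∈ 𝒞)
    (hDB : D ⊆ B) : innerCharge 𝒞 μ D ≤ μ B :=
  innerCharge_le h𝒞 fun _ hC hCD => h.mono h𝒞 hC hB (hCD.trans hDB)

theorem innerCharge_nonneg (h : IsCharge 𝒞 μ) (h𝒞 : IsSetField 𝒞) : 0 ≤ innerCharge 𝒞 μ D :=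
  h.apply_empty h𝒞 ▸ h.le_innerCharge h𝒞 h𝒞.isSetAlgebra.empty_mem (empty_subset D)

theorem innerCharge_union (h : IsCharge 𝒞 μ) (h𝒞 : IsSetField 𝒞) (hB : B ∈ 𝒞) (hX : X ⊆ B)
    (hY : Disjoint Y B) :
    innerCharge 𝒞 μ (X ∪ Y) = innerCharge 𝒞 μ X + innerCharge 𝒞 μ Y := by
  apply le_antisymm
  · refine innerCharge_le h𝒞 fun C hC hCXY => ?_
    rw [← h.inter_add_diff h𝒞 hC hB]
    refine add_le_add (h.le_innerCharge h𝒞 (h𝒞.isSetAlgebra.inter_mem hC hB) fun ω hω => ?_)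
      (h.le_innerCharge h𝒞 (h𝒞.isSetAlgebra.sdiff_mem hC hB) fun ω hω => ?_)
    · exact (hCXY hω.1).resolve_right fun hωY => hY.notMem_of_mem_left hωY hω.2
    · exact (hCXY hω.1).resolve_left fun hωX => hω.2 (hX hωX)
  · have hsum : ∀ C ∈ 𝒞, C ⊆ X → ∀ C' ∈ 𝒞, C' ⊆ Y →
        μ C + μ C' ≤ innerCharge 𝒞 μ (X ∪ Y) := fun C hC hCX C' hC' hC'Y => by
      rw [← h.union C hC C' hC' ((hY.mono_left hC'Y).symm.mono_left (hCX.trans hX))]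
      exact h.le_innerCharge h𝒞 (h𝒞.2.2 _ hC _ hC') (union_subset_union hCX hC'Y)
    have hinnX := innerCharge_le h𝒞 (μ := μ) (D := X)
      (y := innerCharge 𝒞 μ (X ∪ Y) - innerCharge 𝒞 μ Y) fun C hC hCX => by
        have := innerCharge_le h𝒞 (μ := μ) (D := Y) (y := innerCharge 𝒞 μ (X ∪ Y) - μ C)
          fun C' hC' hC'Y => by linarith [hsum C hC hCX C' hC' hC'Y]
        linarith
    linarith

theorem innerCharge_compl_sdiff (h : IsCharge 𝒞 μ) (h𝒞 : IsSetField 𝒞) (hB : B ∈ 𝒞)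
    (F : Set Ω) : innerCharge 𝒞 μ (B \ F)ᶜ = μ univ - μ B + innerCharge 𝒞 μ (B ∩ F) := by
  have hBc := h𝒞.2.1 B hB
  have hset : (B \ F)ᶜ = Bᶜ ∪ B ∩ F := by
    ext ω
    simp only [mem_compl_iff, mem_sdiff, mem_union, mem_inter_iff]
    tauto
  have hμBc : μ univ = μ B + μ Bᶜ := by
    rw [← h.union B hB _ hBc disjoint_compl_right, union_compl_self]
  rw [hset, h.innerCharge_union h𝒞 hBc subset_rfl (disjoint_compl_right.mono_left
    inter_subset_left), h.innerCharge_eq_of_mem h𝒞 hBc]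
  linarith

/-- Inner charge on the part inside `F`, outer charge `μ univ - μ_*(·ᶜ)` on the part outside. -/
theorem isCharge_fieldAdjoin (h : IsCharge 𝒞 μ) (h𝒞 : IsSetField 𝒞) (F : Set Ω) :
    IsCharge (fieldAdjoin 𝒞 F) fun A =>
      innerCharge 𝒞 μ (A ∩ F) + (μ univ - innerCharge 𝒞 μ (A \ F)ᶜ) := by
  refine ⟨fun A ⟨_, _, B₂, hB₂, _, h₂⟩ => ?_, ?_⟩
  · rw [h₂, h.innerCharge_compl_sdiff h𝒞 hB₂]
    linarith [h.innerCharge_nonneg h𝒞 (D := A ∩ F), h.innerCharge_le_apply h𝒞 hB₂ (D := B₂ ∩ F)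
      inter_subset_left]
  rintro A ⟨B₁, hB₁, B₂, hB₂, h₁, h₂⟩ A' ⟨-, -, B₂', hB₂', -, h₂'⟩ hAA'
  have hsep₁ : Disjoint (A' ∩ F) B₁ := disjoint_left.2 fun ω hω hωB =>
    disjoint_left.1 hAA' ((Set.ext_iff.1 h₁ ω).2 ⟨hωB, hω.2⟩).1 hω.1
  -- replacing `B₂'` by `B₂' \ B₂` does not change the trace of `A'` outside `F`
  have h₂'' : A' \ F = (B₂' \ B₂) \ F := by
    ext ω
    refine ⟨fun hω => ⟨⟨((Set.ext_iff.1 h₂' ω).1 hω).1, fun hωB => disjoint_left.1 hAA'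
      ((Set.ext_iff.1 h₂ ω).2 ⟨hωB, hω.2⟩).1 hω.1⟩, hω.2⟩, fun hω => ?_⟩
    exact (Set.ext_iff.1 h₂' ω).2 ⟨hω.1.1, hω.2⟩
  have hB₂'' := h𝒞.isSetAlgebra.sdiff_mem hB₂' hB₂
  have hunion : (A ∪ A') \ F = (B₂ ∪ B₂' \ B₂) \ F := by
    rw [union_sdiff_distrib, union_sdiff_distrib, h₂, h₂'']
  rw [union_inter_distrib_right, h.innerCharge_union h𝒞 hB₁ (h₁ ▸ inter_subset_left) hsep₁,
    hunion, h₂, h₂'', h.innerCharge_compl_sdiff h𝒞 (h𝒞.2.2 _ hB₂ _ hB₂''),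
    h.innerCharge_compl_sdiff h𝒞 hB₂, h.innerCharge_compl_sdiff h𝒞 hB₂'',
    h.union _ hB₂ _ hB₂'' disjoint_sdiff_right, union_inter_distrib_right,
    h.innerCharge_union h𝒞 hB₂ inter_subset_left
      (disjoint_sdiff_left.mono_left inter_subset_left)]
  ring

end IsCharge

theorem IsCharge.exists_extension_innerCharge [Nonempty Ω] (h : IsCharge 𝒞 μ) (h𝒞 : IsSetField 𝒞)
    (F : Set Ω) :
    ∃ ρ : Set Ω → ℝ, IsCharge univ ρ ∧ (∀ B ∈ 𝒞, ρ B = μ B) ∧ ρ F = innerCharge 𝒞 μ F := by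
  obtain ⟨ρ, hρ, hρext⟩ := (h.isCharge_fieldAdjoin h𝒞 F).exists_extension (h𝒞.fieldAdjoin F)
  refine ⟨ρ, hρ, fun B hB => ?_, ?_⟩
  · rw [hρext B (subset_fieldAdjoin F hB), h.innerCharge_compl_sdiff h𝒞 hB]
    ring
  · rw [hρext F (h𝒞.self_mem_fieldAdjoin F), inter_self, Set.sdiff_self, compl_empty,
      h.innerCharge_eq_of_mem h𝒞 h𝒞.1, sub_self, add_zero]

end InnerCharge

section Lexicographic

variable {α : Type*} [LinearOrder α] [WellFoundedLT α] {𝒜 : Set (Set Ω)} {μ : α → Set Ω → ℝ}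
  {K : Set Ω}

noncomputable def lexCond (μ : α → Set Ω → ℝ) (E K : Set Ω) : ℝ :=
  if h : ∃ a, 0 < μ a K then
    μ (wellFounded_lt.min _ h) (E ∩ K) / μ (wellFounded_lt.min _ h) K
  else 0

theorem lexCond_eq {a : α} (ha : IsLeast {b | 0 < μ b K} a) (E : Set Ω) :
    lexCond μ E K = μ a (E ∩ K) / μ a K := by
  have hne : ∃ b, 0 < μ b K := ⟨a, ha.1⟩
  have hmin : IsLeast {b | 0 < μ b K} (wellFounded_lt.min _ hne) :=
    ⟨wellFounded_lt.min_mem _ hne, fun b hb => wellFounded_lt.min_le hb⟩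
  rw [lexCond, dif_pos hne, hmin.unique ha]

theorem isFCP_lexCond (h𝒜 : IsSetField 𝒜) (hμ : ∀ a, IsCharge 𝒜 (μ a))
    (hpos : ∀ K ∈ 𝒜, K.Nonempty → ∃ a, 0 < μ a K) : IsFCP 𝒜 (lexCond μ) := by
  have hlead : ∀ K ∈ 𝒜, K.Nonempty → ∃ a, IsLeast {b | 0 < μ b K} a := fun K hK hne =>
    ⟨_, wellFounded_lt.min_mem _ (hpos K hK hne), fun b hb => wellFounded_lt.min_le hb⟩
  have hint := fun {A B : Set Ω} (hA : A ∈ 𝒜) (hB : B ∈ 𝒜) => h𝒜.isSetAlgebra.inter_mem hA hB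
  refine ⟨fun E _ K _ _ => ?_, fun K hK hne => ?_, fun E hE F hF K hK hne hEK => ?_⟩
  · rw [lexCond, lexCond, inter_assoc, inter_self]
  · obtain ⟨a, ha⟩ := hlead K hK hne
    have hKa : 0 < μ a K := ha.1
    simp only [lexCond_eq ha]
    refine ⟨fun A hA => ⟨div_nonneg ((hμ a).nonneg _ (hint hA hK)) hKa.le, (div_le_one hKa).2
      ((hμ a).mono h𝒜 (hint hA hK) hK inter_subset_right)⟩,
      by simp only [univ_inter, div_self hKa.ne'], fun A hA B hB hAB => ?_⟩
    dsimp only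
    rw [union_inter_distrib_right, (hμ a).union _ (hint hA hK) _ (hint hB hK)
      (hAB.mono inter_subset_left inter_subset_left), add_div]
  · obtain ⟨a, ha⟩ := hlead K hK hne
    have hKa : 0 < μ a K := ha.1
    have hEFK : E ∩ F ∩ K = F ∩ (E ∩ K) := by rw [inter_comm E F, inter_assoc]
    rw [lexCond_eq ha, lexCond_eq ha]
    rcases ((hμ a).nonneg _ (hint hE hK)).lt_or_eq with hEKa | hEKa
    · -- `E ∩ K` has the same leading charge as `K`
      rw [lexCond_eq ⟨hEKa, fun b hb => ha.2 (hb.trans_le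
        ((hμ b).mono h𝒜 (hint hE hK) hK inter_subset_right))⟩, hEFK]
      field_simp
    · have hEFKa : μ a (E ∩ F ∩ K) = 0 := le_antisymm (hEKa ▸ (hμ a).mono h𝒜
        (hint (hint hE hF) hK) (hint hE hK) (hEFK ▸ inter_subset_right))
        ((hμ a).nonneg _ (hint (hint hE hF) hK))
      rw [hEFKa, ← hEKa]
      simp

end Lexicographic

section Strategy

variable {𝒜 : Set (Set Ω)} {P : Set Ω → ℝ} {A K : Set Ω}

theorem IsFAP.apply_eq_zero_of_disjoint (hP : IsFAP 𝒜 P) (h𝒜 : IsSetField 𝒜) (hK : K ∈ 𝒜)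
    (hK1 : P K = 1) (hA : A ∈ 𝒜) (hAK : Disjoint A K) : P A = 0 := by
  have := (hP.1 _ (h𝒜.2.2 _ hA _ hK)).2
  rw [hP.2.2 _ hA _ hK hAK, hK1] at this
  linarith [(hP.1 A hA).1]

theorem IsFAP.apply_inter_eq (hP : IsFAP 𝒜 P) (h𝒜 : IsSetField 𝒜) (hK : K ∈ 𝒜) (hK1 : P K = 1)
    (hA : A ∈ 𝒜) : P (A ∩ K) = P A := by
  rw [← hP.isCharge.inter_add_diff h𝒜 hA hK, hP.apply_eq_zero_of_disjoint h𝒜 hK hK1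
    (h𝒜.isSetAlgebra.sdiff_mem hA hK) disjoint_sdiff_left, add_zero]

theorem IsStrategy.apply_self {ι : Type*} {H : ι → Set Ω} {σ : Set Ω → ι → ℝ}
    (hσ : IsStrategy 𝒜 H σ) {i : ι} (hH𝒜 : H i ∈ 𝒜) : σ (H i) i = 1 :=
  (hσ i).2 _ hH𝒜 subset_rfl

theorem IsStrategy.apply_eq_zero_of_disjoint {ι : Type*} {H : ι → Set Ω}
    {σ : Set Ω → ι → ℝ} (hσ : IsStrategy 𝒜 H σ) (h𝒜 : IsSetField 𝒜) {i : ι} (hH𝒜 : H i ∈ 𝒜)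
    (hA : A ∈ 𝒜) (hAH : Disjoint A (H i)) : σ A i = 0 :=
  (hσ i).1.apply_eq_zero_of_disjoint h𝒜 hH𝒜 (hσ.apply_self hH𝒜) hA hAH

/-- `ν` first, then the `σ (·|H i)` along the order of `ι`, then the point masses along the order
of `Ω`. -/
noncomputable def strategyTiers {ι : Type*} (ν : Set Ω → ℝ) (σ : Set Ω → ι → ℝ)
    (a : WithBot (ι ⊕ₗ Ω)) : Set Ω → ℝ :=
  a.recBotCoe ν fun b => Sum.elim (fun i A => σ A i) (fun ω A => A.indicator 1 ω) (ofLex b)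

theorem exists_isFCP_of_compatible {ι : Type*} {H : ι → Set Ω} {σ : Set Ω → ι → ℝ}
    {ν : Set Ω → ℝ} (h𝒜 : IsSetField 𝒜) (hH : IsPartition H) (hH𝒜 : ∀ i, H i ∈ 𝒜)
    (hσ : IsStrategy 𝒜 H σ) (hν : IsFAP 𝒜 ν)
    (hνσ : ∀ A ∈ 𝒜, ∀ i, ν (A ∩ H i) = σ A i * ν (H i)) :
    ∃ P, IsFCP 𝒜 P ∧ (∀ A ∈ 𝒜, P A univ = ν A) ∧ ∀ A ∈ 𝒜, ∀ i, P A (H i) = σ A i := by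
  obtain ⟨_, _⟩ := exists_wellFoundedLT ι
  obtain ⟨_, _⟩ := exists_wellFoundedLT Ω
  have : WellFoundedLT (ι ⊕ₗ Ω) := ⟨Sum.lex_wf wellFounded_lt wellFounded_lt⟩
  have hσH : ∀ i, σ (H i) i = 1 := fun i => hσ.apply_self (hH𝒜 i)
  have hσH' : ∀ i j, 0 < σ (H i) j → j = i := fun i j hij => by
    by_contra hne
    exact hij.ne' (hσ.apply_eq_zero_of_disjoint h𝒜 (hH𝒜 j) (hH𝒜 i) (hH.2.1 hne).symm)
  refine ⟨lexCond (strategyTiers ν σ), isFCP_lexCond h𝒜 ?_ ?_, fun A _ => ?_, fun A hA i => ?_⟩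
  · intro a
    induction a using WithBot.recBotCoe with
    | bot => exact hν.isCharge
    | coe b =>
      obtain ⟨b | ω, rfl⟩ := toLex.surjective b
      · exact (hσ b).1.isCharge
      · exact isCharge_dirac ω
  · rintro K - ⟨ω, hω⟩
    exact ⟨(toLex (Sum.inr ω) : ι ⊕ₗ Ω), by simp [strategyTiers, hω]⟩
  · rw [lexCond_eq (isLeast_bot_iff.2 (by simp [strategyTiers, hν.2.1]))]
    simp [strategyTiers, hν.2.1]
  · by_cases hνi : 0 < ν (H i)
    · rw [lexCond_eq (isLeast_bot_iff.2 hνi)]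
      simp only [strategyTiers, WithBot.recBotCoe_bot]
      rw [hνσ A hA i, mul_div_cancel_right₀ _ hνi.ne']
    · -- the other `σ (·|H j)` vanish on `H i`, and the point masses come after `σ (·|H i)`
      have hlead : IsLeast {b | 0 < strategyTiers ν σ b (H i)}
          ((toLex (Sum.inl i) : ι ⊕ₗ Ω) : WithBot (ι ⊕ₗ Ω)) := by
        refine ⟨by simp [strategyTiers, hσH], fun b hb => ?_⟩
        induction b using WithBot.recBotCoe with
        | bot => exact absurd hb hνi
        | coe b =>
          obtain ⟨j | ω, rfl⟩ := toLex.surjective b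
          · simp only [strategyTiers, mem_ofPred_eq, WithBot.recBotCoe_coe, ofLex_toLex,
              Sum.elim_inl] at hb
            rw [hσH' i j hb]
          · exact WithBot.coe_le_coe.2 (Sum.Lex.inl_lt_inr i ω).le
      rw [lexCond_eq hlead]
      simp [strategyTiers, (hσ i).1.apply_inter_eq h𝒜 (hH𝒜 i) (hσH i) hA, hσH]

end Strategy

theorem isSetField_univ : IsSetField (univ : Set (Set Ω)) :=
  ⟨trivial, fun _ _ => trivial, fun _ _ _ _ => trivial⟩

section Mixture

variable {ι : Type*} {H : ι → Set Ω} {𝒜L 𝒜 : Set (Set Ω)} {π : Set Ω → ℝ}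
  {σ : Set Ω → ι → ℝ} {A C F : Set Ω}

/-- `μ₁` of the proof sketch. -/
noncomputable def mixture (H : ι → Set Ω) (π : Set Ω → ℝ) (σ : Set Ω → ι → ℝ) (A : Set Ω) : ℝ :=
  ∑' i, σ A i * π (H i)

theorem IsFieldOver.subset_or_disjoint (h𝒜L : IsFieldOver H 𝒜L) (hH : IsPartition H)
    (hC : C ∈ 𝒜L) (i : ι) : H i ⊆ C ∨ Disjoint (H i) C := by
  obtain ⟨S, rfl⟩ := h𝒜L.2.2 C hC
  by_cases hi : i ∈ S
  · exact Or.inl (subset_biUnion_of_mem hi)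
  · exact Or.inr (disjoint_iUnion₂_right.2 fun j hj => hH.2.1 fun hij => hi (hij ▸ hj))

theorem apply_inter_eq_strategy_mul (hH : IsPartition H) (h𝒜L : IsFieldOver H 𝒜L)
    (h𝒜 : IsSetField 𝒜) (h𝒜L𝒜 : 𝒜L ⊆ 𝒜) (hπ : IsFAP 𝒜L π) (hσ : IsStrategy 𝒜 H σ)
    (hC : C ∈ 𝒜L) (i : ι) : π (C ∩ H i) = σ C i * π (H i) := by
  rcases h𝒜L.subset_or_disjoint hH hC i with hsub | hdisj
  · rw [inter_eq_right.2 hsub, (hσ i).2 C (h𝒜L𝒜 hC) hsub, one_mul]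
  · rw [hdisj.symm.inter_eq, hπ.isCharge.apply_empty h𝒜L.1, hσ.apply_eq_zero_of_disjoint h𝒜
      (h𝒜L𝒜 (h𝒜L.2.1 i)) (h𝒜L𝒜 hC) hdisj.symm, zero_mul]

theorem summable_strategy_mul (hH : IsPartition H) (h𝒜L : IsFieldOver H 𝒜L)
    (hπ : IsFAP 𝒜L π) (hσ : IsStrategy 𝒜 H σ) (hA : A ∈ 𝒜) :
    Summable fun i => σ A i * π (H i) := by
  have hπH : ∀ i, 0 ≤ π (H i) := fun i => (hπ.1 _ (h𝒜L.2.1 i)).1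
  refine .of_nonneg_of_le (fun i => mul_nonneg ((hσ i).1.1 A hA).1 (hπH i))
    (fun i => mul_le_of_le_one_left (hπH i) ((hσ i).1.1 A hA).2)
    (summable_of_sum_le (c := 1) hπH fun u => ?_)
  rw [← hπ.isCharge.biUnion h𝒜L.1 (fun i _ => h𝒜L.2.1 i) fun i _ j _ hij => hH.2.1 hij]
  exact (hπ.1 _ (h𝒜L.1.isSetAlgebra.biUnion_mem u fun i _ => h𝒜L.2.1 i)).2

theorem isCharge_mixture (hH : IsPartition H) (h𝒜L : IsFieldOver H 𝒜L) (hπ : IsFAP 𝒜L π)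
    (hσ : IsStrategy 𝒜 H σ) : IsCharge 𝒜 (mixture H π σ) := by
  refine ⟨fun A hA => tsum_nonneg fun i => mul_nonneg ((hσ i).1.1 A hA).1
    (hπ.1 _ (h𝒜L.2.1 i)).1, fun A hA B hB hAB => ?_⟩
  have hsum : (fun i => σ (A ∪ B) i * π (H i)) = fun i => σ A i * π (H i) + σ B i * π (H i) :=
    funext fun i => by
      rw [show σ (A ∪ B) i = σ A i + σ B i from (hσ i).1.2.2 A hA B hB hAB, add_mul]
  rw [mixture, hsum, (summable_strategy_mul hH h𝒜L hπ hσ hA).tsum_add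
    (summable_strategy_mul hH h𝒜L hπ hσ hB)]
  rfl

theorem mixture_inter (hH : IsPartition H) (h𝒜 : IsSetField 𝒜) (hH𝒜 : ∀ i, H i ∈ 𝒜)
    (hσ : IsStrategy 𝒜 H σ) (hA : A ∈ 𝒜) (i : ι) :
    mixture H π σ (A ∩ H i) = σ A i * π (H i) := by
  have hAi := h𝒜.isSetAlgebra.inter_mem hA (hH𝒜 i)
  rw [mixture, tsum_eq_single i fun j hji => by
    rw [hσ.apply_eq_zero_of_disjoint h𝒜 (hH𝒜 j) hAi
      ((hH.2.1 hji).symm.mono_left inter_subset_right), zero_mul],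
    (hσ i).1.apply_inter_eq h𝒜 (hH𝒜 i) (hσ.apply_self (hH𝒜 i)) hA]

theorem mixture_le (hH : IsPartition H) (h𝒜L : IsFieldOver H 𝒜L) (h𝒜 : IsSetField 𝒜)
    (h𝒜L𝒜 : 𝒜L ⊆ 𝒜) (hπ : IsFAP 𝒜L π) (hσ : IsStrategy 𝒜 H σ) (hC : C ∈ 𝒜L) :
    mixture H π σ C ≤ π C := by
  refine (summable_strategy_mul hH h𝒜L hπ hσ (h𝒜L𝒜 hC)).tsum_le_of_sum_le fun u => ?_
  rw [← Finset.sum_congr rfl fun i _ => apply_inter_eq_strategy_mul hH h𝒜L h𝒜 h𝒜L𝒜 hπ hσ hC i,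
    ← hπ.isCharge.biUnion h𝒜L.1 (fun i _ => h𝒜L.1.isSetAlgebra.inter_mem hC (h𝒜L.2.1 i))
      fun i _ j _ hij => (hH.2.1 hij).mono inter_subset_right inter_subset_right,
    ← inter_iUnion₂]
  exact hπ.isCharge.mono h𝒜L.1 (h𝒜L.1.isSetAlgebra.inter_mem hC
    (h𝒜L.1.isSetAlgebra.biUnion_mem u fun i _ => h𝒜L.2.1 i)) hC inter_subset_left

end Mixture

section JointLower

variable {ι : Type*} {H : ι → Set Ω} {𝒜L 𝒜 : Set (Set Ω)} {π : Set Ω → ℝ}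
  {σ : Set Ω → ι → ℝ} {F : Set Ω}

theorem exists_mem_fcpSet_apply_eq [Nonempty Ω] (hH : IsPartition H) (h𝒜L : IsFieldOver H 𝒜L)
    (h𝒜 : IsSetField 𝒜) (h𝒜L𝒜 : 𝒜L ⊆ 𝒜) (hπ : IsFAP 𝒜L π) (hσ : IsStrategy 𝒜 H σ)
    (hF : F ∈ 𝒜) :
    ∃ P ∈ FCPSet 𝒜 𝒜L H π σ, P F univ =
      mixture H π σ F + innerCharge 𝒜L (fun B => π B - mixture H π σ B) F := by
  have hH𝒜 : ∀ i, H i ∈ 𝒜 := fun i => h𝒜L𝒜 (h𝒜L.2.1 i)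
  have hmix := isCharge_mixture hH h𝒜L hπ hσ
  have hresidual : IsCharge 𝒜L fun B => π B - mixture H π σ B :=
    ⟨fun B hB => sub_nonneg.2 (mixture_le hH h𝒜L h𝒜 h𝒜L𝒜 hπ hσ hB), fun A hA B hB hAB => by
      rw [hπ.2.2 A hA B hB hAB, hmix.union A (h𝒜L𝒜 hA) B (h𝒜L𝒜 hB) hAB]
      ring⟩
  obtain ⟨ρ, hρ, hρL, hρF⟩ := hresidual.exists_extension_innerCharge h𝒜L.1 F
  set ν : Set Ω → ℝ := fun A => mixture H π σ A + ρ A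
  have hνL : ∀ B ∈ 𝒜L, ν B = π B := fun B hB => by simp only [ν, hρL B hB]; ring
  have hmixH : ∀ i, mixture H π σ (H i) = π (H i) := fun i => by
    simpa [(hσ i).1.2.1] using mixture_inter (π := π) hH h𝒜 hH𝒜 hσ h𝒜.1 i
  -- `ρ` vanishes on every `H i`, so `ν` inherits the compatibility with `σ` from `mixture`
  have hνσ : ∀ A ∈ 𝒜, ∀ i, ν (A ∩ H i) = σ A i * ν (H i) := fun A hA i => by
    have hρH : ρ (H i) = 0 := by rw [hρL _ (h𝒜L.2.1 i), hmixH, sub_self]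
    have hρAH : ρ (A ∩ H i) = 0 := le_antisymm
      (hρH ▸ hρ.mono isSetField_univ trivial trivial inter_subset_right) (hρ.nonneg _ trivial)
    simp only [ν, mixture_inter hH h𝒜 hH𝒜 hσ hA, hmixH, hρAH, hρH, add_zero]
  obtain ⟨P, hP, hPν, hPσ⟩ := exists_isFCP_of_compatible h𝒜 hH hH𝒜 hσ
    ((hmix.add (hρ.anti (subset_univ 𝒜))).isFAP h𝒜 ((hνL _ h𝒜L.1.1).trans hπ.2.1)) hνσ
  exact ⟨P, ⟨hP, fun B hB => (hPν B (h𝒜L𝒜 hB)).trans (hνL B hB), hPσ⟩, by rw [hPν F hF, hρF]⟩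

def partitionLowerSums (H : ι → Set Ω) (𝒜L : Set (Set Ω)) (π : Set Ω → ℝ)
    (σ : Set Ω → ι → ℝ) (F : Set Ω) : Set ℝ :=
  {x | ∃ (s : Finset ι) (T : Finset (Set Ω)),
    (↑T : Set (Set Ω)) ⊆ 𝒜L ∧
    (∀ B ∈ T, (B : Set Ω).Nonempty) ∧
    (∀ B ∈ T, ∀ B' ∈ T, B ≠ B' → Disjoint B B') ∧
    (∀ i ∈ s, ∀ B ∈ T, Disjoint (H i) B) ∧
    ((⋃ i ∈ s, H i) ∪ ⋃₀ (↑T : Set (Set Ω)) = Set.univ) ∧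
    x = (∑ i ∈ s, σ F i * π (H i)) + ∑ B ∈ T, if B ⊆ F then π B else 0}

theorem partitionLowerSums_nonempty [Nonempty Ω] (h𝒜L : IsSetField 𝒜L) :
    (partitionLowerSums H 𝒜L π σ F).Nonempty :=
  ⟨_, ∅, {univ}, by simpa using h𝒜L.1, by simp, by simp, by simp, by simp, rfl⟩

theorem le_apply_of_mem_partitionLowerSums [Nonempty Ω] (hH : IsPartition H)
    (h𝒜L : IsFieldOver H 𝒜L) (h𝒜 : IsSetField 𝒜) (h𝒜L𝒜 : 𝒜L ⊆ 𝒜) (hF : F ∈ 𝒜)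
    {P : Set Ω → Set Ω → ℝ} (hP : P ∈ FCPSet 𝒜 𝒜L H π σ) {x : ℝ}
    (hx : x ∈ partitionLowerSums H 𝒜L π σ F) :
    x ≤ P F univ := by
  obtain ⟨s, T, hT𝒜L, -, hTdisj, hsT, -, rfl⟩ := hx
  obtain ⟨hPfcp, hPπ, hPσ⟩ := hP
  have hH𝒜 : ∀ i, H i ∈ 𝒜 := fun i => h𝒜L𝒜 (h𝒜L.2.1 i)
  have hμ : IsCharge 𝒜 fun A => P A univ := (hPfcp.2.1 univ h𝒜.1 univ_nonempty).isCharge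
  set U := ⋃ i ∈ s, H i
  have hU : U ∈ 𝒜 := h𝒜.isSetAlgebra.biUnion_mem s fun i _ => hH𝒜 i
  -- (C3) with `E = H i`, `K = Ω`
  have hFH : ∀ i, P (F ∩ H i) univ = σ F i * π (H i) := fun i => by
    have := hPfcp.2.2 (H i) (hH𝒜 i) F hF univ h𝒜.1 univ_nonempty (by simpa using hH.1 i)
    rw [inter_univ] at this
    rw [inter_comm, this, hPπ _ (h𝒜L.2.1 i), hPσ F hF i, mul_comm]
  have h₁ : ∑ i ∈ s, σ F i * π (H i) = P (F ∩ U) univ := by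
    rw [inter_iUnion₂, hμ.biUnion h𝒜 (fun i _ => h𝒜.isSetAlgebra.inter_mem hF (hH𝒜 i))
      fun i _ j _ hij => (hH.2.1 hij).mono inter_subset_right inter_subset_right]
    exact Finset.sum_congr rfl fun i _ => (hFH i).symm
  set T' := T.filter (· ⊆ F)
  have hT' : ∀ B ∈ T', B ∈ 𝒜 := fun B hB => h𝒜L𝒜 (hT𝒜L (Finset.mem_filter.1 hB).1)
  have h₂ : ∑ B ∈ T, (if B ⊆ F then π B else 0) = P (⋃ B ∈ T', B) univ := by
    rw [← Finset.sum_filter, hμ.biUnion h𝒜 hT' fun B hB B' hB' hne =>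
      hTdisj B (Finset.mem_filter.1 hB).1 B' (Finset.mem_filter.1 hB').1 hne]
    exact Finset.sum_congr rfl fun B hB => (hPπ B (hT𝒜L (Finset.mem_filter.1 hB).1)).symm
  have h₃ : P (⋃ B ∈ T', B) univ ≤ P (F \ U) univ :=
    hμ.mono h𝒜 (h𝒜.isSetAlgebra.biUnion_mem T' hT') (h𝒜.isSetAlgebra.sdiff_mem hF hU)
      (iUnion₂_subset fun B hB => subset_sdiff.2 ⟨(Finset.mem_filter.1 hB).2,
        disjoint_iUnion₂_right.2 fun i hi => (hsT i hi B (Finset.mem_filter.1 hB).1).symm⟩)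
  linarith [hμ.inter_add_diff h𝒜 hF hU]

theorem add_le_sSup_partitionLowerSums (h𝒜L : IsFieldOver H 𝒜L) (hπ : IsFAP 𝒜L π)
    (hbdd : BddAbove (partitionLowerSums H 𝒜L π σ F)) (s : Finset ι) {B : Set Ω} (hB : B ∈ 𝒜L)
    (hBs : ∀ i ∈ s, Disjoint (H i) B) (hBF : B ⊆ F) :
    ∑ i ∈ s, σ F i * π (H i) + π B ≤ sSup (partitionLowerSums H 𝒜L π σ F) := by
  set U := ⋃ i ∈ s, H i
  have hU : U ∈ 𝒜L := h𝒜L.1.isSetAlgebra.biUnion_mem s fun i _ => h𝒜L.2.1 i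
  set R := (U ∪ B)ᶜ
  have hR : R ∈ 𝒜L := h𝒜L.1.2.1 _ (h𝒜L.1.2.2 _ hU _ hB)
  have hBR : Disjoint B R := disjoint_compl_right.mono_left subset_union_right
  -- the partition `{H i | i ∈ s} ∪ {B, R}`, with empty pieces dropped
  set T := ({B, R} : Finset (Set Ω)).filter Set.Nonempty
  have hT : ∀ X ∈ T, X = B ∨ X = R := fun X hX => by simpa using (Finset.mem_filter.1 hX).1
  have hT𝒜L : ∀ X ∈ T, X ∈ 𝒜L := fun X hX => (hT X hX).elim (· ▸ hB) (· ▸ hR)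
  have hmem : ∑ i ∈ s, σ F i * π (H i) + ∑ X ∈ T, (if X ⊆ F then π X else 0) ∈
      partitionLowerSums H 𝒜L π σ F := by
    refine ⟨s, T, hT𝒜L, fun X hX => (Finset.mem_filter.1 hX).2, fun X hX X' hX' hne => ?_,
      fun i hi X hX => ?_, eq_univ_of_forall fun ω => ?_, rfl⟩
    · rcases hT X hX with rfl | rfl <;> rcases hT X' hX' with rfl | rfl <;>
        first | exact absurd rfl hne | exact hBR | exact hBR.symm
    · rcases hT X hX with rfl | rfl
      · exact hBs i hi
      · exact disjoint_compl_right.mono_left ((subset_biUnion_of_mem hi).trans subset_union_left)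
    · by_cases hωU : ω ∈ U
      · exact Or.inl hωU
      by_cases hωB : ω ∈ B
      · exact Or.inr ⟨B, Finset.mem_filter.2 ⟨by simp, ω, hωB⟩, hωB⟩
      · have hωR : ω ∈ R := fun h => h.elim hωU hωB
        exact Or.inr ⟨R, Finset.mem_filter.2 ⟨by simp, ω, hωR⟩, hωR⟩
  have hπB : π B ≤ ∑ X ∈ T, if X ⊆ F then π X else 0 := by
    have hnonneg : ∀ X ∈ T, 0 ≤ if X ⊆ F then π X else 0 := fun X hX => by
      split_ifs
      exacts [(hπ.1 X (hT𝒜L X hX)).1, le_rfl]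
    rcases B.eq_empty_or_nonempty with hBe | hBne
    · rw [hBe, hπ.isCharge.apply_empty h𝒜L.1]
      exact Finset.sum_nonneg hnonneg
    · simpa [hBF] using Finset.single_le_sum hnonneg (Finset.mem_filter.2 ⟨by simp, hBne⟩)
  linarith [le_csSup hbdd hmem]

theorem mixture_add_innerCharge_le (hH : IsPartition H) (h𝒜L : IsFieldOver H 𝒜L)
    (h𝒜 : IsSetField 𝒜) (h𝒜L𝒜 : 𝒜L ⊆ 𝒜) (hπ : IsFAP 𝒜L π) (hσ : IsStrategy 𝒜 H σ)
    (hF : F ∈ 𝒜) (hbdd : BddAbove (partitionLowerSums H 𝒜L π σ F)) :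
    mixture H π σ F + innerCharge 𝒜L (fun B => π B - mixture H π σ B) F ≤
      sSup (partitionLowerSums H 𝒜L π σ F) := by
  have hcore : ∀ s : Finset ι, ∀ C ∈ 𝒜L, C ⊆ F → ∑ i ∈ s, σ F i * π (H i) +
      (π C - mixture H π σ C) ≤ sSup (partitionLowerSums H 𝒜L π σ F) := by
    intro s C hC hCF
    set U := ⋃ i ∈ s, H i
    have hU : U ∈ 𝒜L := h𝒜L.1.isSetAlgebra.biUnion_mem s fun i _ => h𝒜L.2.1 i
    have h₁ := add_le_sSup_partitionLowerSums h𝒜L hπ hbdd s (h𝒜L.1.isSetAlgebra.sdiff_mem hC hU)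
      (fun i hi => disjoint_sdiff_right.mono_left (subset_biUnion_of_mem hi))
      (sdiff_subset.trans hCF)
    have h₂ : ∑ i ∈ s, σ C i * π (H i) = π (C ∩ U) := by
      rw [inter_iUnion₂, hπ.isCharge.biUnion h𝒜L.1
        (fun i _ => h𝒜L.1.isSetAlgebra.inter_mem hC (h𝒜L.2.1 i))
        fun i _ j _ hij => (hH.2.1 hij).mono inter_subset_right inter_subset_right]
      exact Finset.sum_congr rfl fun i _ =>
        (apply_inter_eq_strategy_mul hH h𝒜L h𝒜 h𝒜L𝒜 hπ hσ hC i).symm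
    have h₃ : ∑ i ∈ s, σ C i * π (H i) ≤ mixture H π σ C :=
      (summable_strategy_mul hH h𝒜L hπ hσ (h𝒜L𝒜 hC)).sum_le_tsum s fun i _ =>
        mul_nonneg ((hσ i).1.1 C (h𝒜L𝒜 hC)).1 (hπ.1 _ (h𝒜L.2.1 i)).1
    linarith [hπ.isCharge.inter_add_diff h𝒜L.1 hC hU]
  have hinner := innerCharge_le h𝒜L.1 (μ := fun B => π B - mixture H π σ B) (D := F)
    (y := sSup (partitionLowerSums H 𝒜L π σ F) - mixture H π σ F) fun C hC hCF => by
      have := (summable_strategy_mul hH h𝒜L hπ hσ hF).tsum_le_of_sum_le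
        (a₂ := sSup (partitionLowerSums H 𝒜L π σ F) - (π C - mixture H π σ C))
        fun s => by linarith [hcore s C hC hCF]
      rw [← mixture] at this
      linarith
  linarith

end JointLower

theorem statement1_general {Ω ι κ : Type*} [Nonempty Ω] (H : ι → Set Ω) (E : κ → Set Ω)
    (𝒜L 𝒜E 𝒜 : Set (Set Ω))
    (hH : IsPartition H)
    (h𝒜L : IsFieldOver H 𝒜L)
    (h𝒜 : IsJointField H E 𝒜L 𝒜E 𝒜)
    (π : Set Ω → ℝ) (hπ : IsFAP 𝒜L π)
    (σ : Set Ω → ι → ℝ) (hσ : IsStrategy 𝒜 H σ)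
    (F : Set Ω) (hF : F ∈ 𝒜) :
    lowEnv (FCPSet 𝒜 𝒜L H π σ) F Set.univ =
      sSup {x | ∃ (s : Finset ι) (T : Finset (Set Ω)),
        (↑T : Set (Set Ω)) ⊆ 𝒜L ∧
        (∀ B ∈ T, (B : Set Ω).Nonempty) ∧
        (∀ B ∈ T, ∀ B' ∈ T, B ≠ B' → Disjoint B B') ∧
        (∀ i ∈ s, ∀ B ∈ T, Disjoint (H i) B) ∧
        ((⋃ i ∈ s, H i) ∪ ⋃₀ (↑T : Set (Set Ω)) = Set.univ) ∧
        x = (∑ i ∈ s, σ F i * π (H i)) + ∑ B ∈ T, if B ⊆ F then π B else 0} := by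
  obtain ⟨h𝒜f, h𝒜L𝒜, -⟩ := h𝒜
  change sInf _ = sSup (partitionLowerSums H 𝒜L π σ F)
  have hlow : ∀ P ∈ FCPSet 𝒜 𝒜L H π σ, ∀ x ∈ partitionLowerSums H 𝒜L π σ F, x ≤ P F univ :=
    fun P hP x hx => le_apply_of_mem_partitionLowerSums hH h𝒜L h𝒜f h𝒜L𝒜 hF hP hx
  obtain ⟨P₀, hP₀, hP₀F⟩ := exists_mem_fcpSet_apply_eq hH h𝒜L h𝒜f h𝒜L𝒜 hπ hσ hF
  obtain ⟨x₀, hx₀⟩ := partitionLowerSums_nonempty (H := H) (π := π) (σ := σ) (F := F) h𝒜L.1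
  have hbdd : BddAbove (partitionLowerSums H 𝒜L π σ F) := ⟨P₀ F univ, hlow P₀ hP₀⟩
  refine le_antisymm ?_ (csSup_le ⟨x₀, hx₀⟩ fun x hx => le_csInf ⟨_, P₀, hP₀, rfl⟩ ?_)
  · calc sInf ((fun P => P F univ) '' FCPSet 𝒜 𝒜L H π σ) ≤ P₀ F univ :=
          csInf_le ⟨x₀, by rintro _ ⟨P, hP, rfl⟩; exact hlow P hP x₀ hx₀⟩ ⟨P₀, hP₀, rfl⟩
      _ ≤ sSup (partitionLowerSums H 𝒜L π σ F) :=
          hP₀F ▸ mixture_add_innerCharge_le hH h𝒜L h𝒜f h𝒜L𝒜 hπ hσ hF hbdd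
  · rintro _ ⟨P, hP, rfl⟩
    exact hlow P hP x hx

/-- closed form of the lower joint probability `P^j_*` as a supremum over
finite partitions `{H_{i₁},…,H_{iₙ}} ∪ {B₁,…,B_t} ⊆ 𝒜L` of `Ω`. -/
theorem statement1 {Ω ι κ : Type*} [Nonempty Ω] (H : ι → Set Ω) (E : κ → Set Ω)
    (𝒜L 𝒜E 𝒜 : Set (Set Ω))
    (hH : IsPartition H) (hE : IsPartition E)
    (h𝒜L : IsFieldOver H 𝒜L) (h𝒜E : IsFieldOver E 𝒜E)
    (h𝒜 : IsJointField H E 𝒜L 𝒜E 𝒜)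
    (π : Set Ω → ℝ) (hπ : IsFAP 𝒜L π)
    (σ : Set Ω → ι → ℝ) (hσ : IsStrategy 𝒜 H σ)
    (F : Set Ω) (hF : F ∈ 𝒜) :
    lowEnv (FCPSet 𝒜 𝒜L H π σ) F Set.univ =
      sSup {x | ∃ (s : Finset ι) (T : Finset (Set Ω)),
        (↑T : Set (Set Ω)) ⊆ 𝒜L ∧
        (∀ B ∈ T, (B : Set Ω).Nonempty) ∧
        (∀ B ∈ T, ∀ B' ∈ T, B ≠ B' → Disjoint B B') ∧
        (∀ i ∈ s, ∀ B ∈ T, Disjoint (H i) B) ∧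
        ((⋃ i ∈ s, H i) ∪ ⋃₀ (↑T : Set (Set Ω)) = Set.univ) ∧
        x = (∑ i ∈ s, σ F i * π (H i)) + ∑ B ∈ T, if B ⊆ F then π B else 0} :=
  statement1_general H E 𝒜L 𝒜E 𝒜 hH h𝒜L h𝒜 π hπ σ hσ F hF
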